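/- Under the SIR-SBM ODE system with initial data in U_0, the limit s_k(∞) = lim_{t→∞} s_k(t) satisfies the implicit equation s_k(∞) = s_k(0) * exp( -(η/(η+γ)) Σ_ℓ W_{ℓk} ( s_ℓ(0) - s_ℓ(∞) + x_ℓ(0) ) ). -/

import Mathlib

/-!
The vector `x` stays nonnegative: `y = e^{(η+γ)t} x` solves `y' = B(t) y` with `B ≥ 0`, and
a Grönwall estimate for the negative parts of `y` forces them to vanish. Hence `s_ℓ + x_ℓ`, whose
derivative is `-(η+γ) x_ℓ`, decreases to a limit, so `x_ℓ` converges, and its limit is `0` because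
the derivative of a convergent function cannot tend to a nonzero limit; thus `s_ℓ + x_ℓ → s_ℓ(∞)`.
Finally `s_k(t) = s_k(0) exp(-(η/(η+γ)) Σ_ℓ W_{ℓk} (s_ℓ(0) + x_ℓ(0) - s_ℓ(t) - x_ℓ(t)))`, since
both sides solve the same scalar linear equation, and `t → ∞` gives the claim.
-/

open Filter

/-- The SIR-SBM ODE system: `ds_k/dt = -η s_k Σ_ℓ x_ℓ W_{ℓk}`,
`di_k/dt = -γ i_k + η s_k Σ_ℓ x_ℓ W_{ℓk}`, `dx_k/dt = -(η+γ) x_k + η s_k Σ_ℓ x_ℓ W_{ℓk}`,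
holding on `[0,∞)`. -/
def sirODE {K : ℕ} (W : Matrix (Fin K) (Fin K) ℝ) (η γ : ℝ)
    (s i x : ℝ → Fin K → ℝ) : Prop :=
  ∀ k : Fin K, ∀ t ∈ Set.Ici (0 : ℝ),
    HasDerivWithinAt (fun τ => s τ k)
      (-η * s t k * ∑ l, x t l * W l k) (Set.Ici 0) t ∧
    HasDerivWithinAt (fun τ => i τ k)
      (-γ * i t k + η * s t k * ∑ l, x t l * W l k) (Set.Ici 0) t ∧
    HasDerivWithinAt (fun τ => x τ k)
      (-(η + γ) * x t k + η * s t k * ∑ l, x t l * W l k) (Set.Ici 0) t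

/-- The set `U₀ = { y ∈ [0,∞)^{3K} : Σ_k (s_k + i_k) ≤ 1, Σ_k (s_k + x_k) ≤ 2 }`. -/
def inU0 {K : ℕ} (s i x : Fin K → ℝ) : Prop :=
  (∀ k, 0 ≤ s k) ∧ (∀ k, 0 ≤ i k) ∧ (∀ k, 0 ≤ x k) ∧
    (∑ k, (s k + i k)) ≤ 1 ∧ (∑ k, (s k + x k)) ≤ 2

open Set Topology

lemma continuous_comp_max_of_continuousOn {f : ℝ → ℝ} {a : ℝ} (hf : ContinuousOn f (Ici a)) :
    Continuous fun t => f (max t a) :=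
  hf.comp_continuous (continuous_id.max continuous_const) fun t => le_max_right t a

lemma integral_comp_max_eq_sub {f g : ℝ → ℝ}
    (hf : ∀ t ≥ 0, HasDerivWithinAt f (g t) (Ici 0) t) (hg : ContinuousOn g (Ici 0))
    {t : ℝ} (ht : 0 ≤ t) : ∫ τ in (0 : ℝ)..t, g (max τ 0) = f t - f 0 := by
  refine intervalIntegral.integral_eq_sub_of_hasDeriv_right_of_le ht
    (fun u hu => (hf u hu.1).continuousWithinAt.mono Icc_subset_Ici_self) (fun u hu => ?_)
    ((continuous_comp_max_of_continuousOn hg).intervalIntegrable _ _)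
  simp only [max_eq_left hu.1.le]
  exact (hf u hu.1.le).mono fun z hz => hu.1.le.trans (le_of_lt hz)

lemma eq_zero_of_le_mul_integral {φ : ℝ → ℝ} {C T : ℝ} (hφ : Continuous φ) (hC : 0 ≤ C)
    (hφ_nonneg : ∀ t ∈ Icc 0 T, 0 ≤ φ t)
    (hle : ∀ t ∈ Icc 0 T, φ t ≤ C * ∫ τ in (0 : ℝ)..t, φ τ) :
    ∀ t ∈ Icc 0 T, φ t = 0 := by
  have hΦ : ∀ t, HasDerivAt (fun u => ∫ τ in (0 : ℝ)..u, φ τ) (φ t) t := fun t =>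
    intervalIntegral.integral_hasDerivAt_right (hφ.intervalIntegrable _ _)
      (hφ.stronglyMeasurableAtFilter _ _) hφ.continuousAt
  have hΦ_zero := eq_zero_of_abs_deriv_le_mul_abs_self_of_eq_zero_right (K := C)
    (fun t _ => (hΦ t).continuousAt.continuousWithinAt) (fun t _ => (hΦ t).hasDerivWithinAt)
    intervalIntegral.integral_same fun t ht => by
      rw [Real.norm_of_nonneg (hφ_nonneg t (Ico_subset_Icc_self ht)), Real.norm_eq_abs]
      exact (hle t (Ico_subset_Icc_self ht)).trans (mul_le_mul_of_nonneg_left (le_abs_self _) hC)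
  intro t ht
  refine le_antisymm ?_ (hφ_nonneg t ht)
  simpa [hΦ_zero t ht] using hle t ht

lemma negPart_add_integral_le {ι : Type*} [Fintype ι] {a t : ℝ} {b z : ℝ → ι → ℝ}
    (ha : 0 ≤ a) (ht : 0 ≤ t) (hb : ∀ l, Continuous fun τ => b τ l)
    (hz : ∀ l, Continuous fun τ => z τ l) (hb_nonneg : ∀ τ ∈ Icc 0 t, ∀ l, 0 ≤ b τ l) :
    (a + ∫ τ in (0 : ℝ)..t, ∑ l, b τ l * z τ l)⁻ ≤
      ∫ τ in (0 : ℝ)..t, ∑ l, b τ l * (z τ l)⁻ := by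
  have hintegrable : ∀ w : ℝ → ι → ℝ, (∀ l, Continuous fun τ => w τ l) →
      IntervalIntegrable (fun τ => ∑ l, b τ l * w τ l) MeasureTheory.volume 0 t := fun w hw =>
    (continuous_finsetSum _ fun l _ => (hb l).mul (hw l)).intervalIntegrable _ _
  have hneg : -∫ τ in (0 : ℝ)..t, ∑ l, b τ l * z τ l ≤
      ∫ τ in (0 : ℝ)..t, ∑ l, b τ l * (z τ l)⁻ := by
    rw [← intervalIntegral.integral_neg]
    refine intervalIntegral.integral_mono_on ht (hintegrable z hz).neg
      (hintegrable _ fun l => continuous_negPart.comp (hz l)) fun τ hτ => ?_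
    rw [← Finset.sum_neg_distrib]
    exact Finset.sum_le_sum fun l _ => by
      rw [← mul_neg]; exact mul_le_mul_of_nonneg_left (neg_le_negPart _) (hb_nonneg τ hτ l)
  rw [negPart_def]
  refine max_le (by linarith) (intervalIntegral.integral_nonneg ht fun τ hτ =>
    Finset.sum_nonneg fun l _ => mul_nonneg (hb_nonneg τ hτ l) (negPart_nonneg _))

lemma sum_negPart_le_mul_integral {ι : Type*} [Fintype ι] {y : ℝ → ι → ℝ}
    {b : ℝ → ι → ι → ℝ} {M t : ℝ} (ht : 0 ≤ t) (hy : ∀ k, Continuous fun τ => y τ k)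
    (hb : ∀ k l, Continuous fun τ => b τ k l) (hb_nonneg : ∀ τ ∈ Icc 0 t, ∀ k l, 0 ≤ b τ k l)
    (hcol : ∀ τ ∈ Icc 0 t, ∀ l, ∑ k, b τ k l ≤ M) (hy₀ : ∀ k, 0 ≤ y 0 k)
    (hint : ∀ k, y t k = y 0 k + ∫ τ in (0 : ℝ)..t, ∑ l, b τ k l * y τ l) :
    ∑ k, (y t k)⁻ ≤ M * ∫ τ in (0 : ℝ)..t, ∑ k, (y τ k)⁻ := by
  have hy_neg : ∀ l, Continuous fun τ => (y τ l)⁻ := fun l => continuous_negPart.comp (hy l)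
  calc ∑ k, (y t k)⁻
      ≤ ∑ k, ∫ τ in (0 : ℝ)..t, ∑ l, b τ k l * (y τ l)⁻ :=
        Finset.sum_le_sum fun k _ => by
          rw [hint k]
          exact negPart_add_integral_le (hy₀ k) ht (hb k) hy fun τ hτ => hb_nonneg τ hτ k
    _ = ∫ τ in (0 : ℝ)..t, ∑ l, (∑ k, b τ k l) * (y τ l)⁻ := by
        rw [← intervalIntegral.integral_finsetSum fun k _ => ?_]
        · simp only [Finset.sum_mul]
          exact intervalIntegral.integral_congr fun τ _ => Finset.sum_comm
        · exact (continuous_finsetSum _ fun l _ => (hb k l).mul (hy_neg l)).intervalIntegrable _ _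
    _ ≤ ∫ τ in (0 : ℝ)..t, M * ∑ k, (y τ k)⁻ := by
        refine intervalIntegral.integral_mono_on ht ?_ ?_ fun τ hτ => ?_
        · exact (continuous_finsetSum _ fun l _ =>
            (continuous_finsetSum _ fun k _ => hb k l).mul (hy_neg l)).intervalIntegrable _ _
        · exact (continuous_const.mul
            (continuous_finsetSum _ fun k _ => hy_neg k)).intervalIntegrable _ _
        · rw [Finset.mul_sum]
          exact Finset.sum_le_sum fun l _ =>
            mul_le_mul_of_nonneg_right (hcol τ hτ l) (negPart_nonneg _)
    _ = M * ∫ τ in (0 : ℝ)..t, ∑ k, (y τ k)⁻ := intervalIntegral.integral_const_mul _ _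

lemma nonneg_of_eq_add_integral {ι : Type*} [Fintype ι] {y : ℝ → ι → ℝ} {b : ℝ → ι → ι → ℝ}
    (hy : ∀ k, Continuous fun τ => y τ k) (hb : ∀ k l, Continuous fun τ => b τ k l)
    (hb_nonneg : ∀ τ ≥ 0, ∀ k l, 0 ≤ b τ k l) (hy₀ : ∀ k, 0 ≤ y 0 k)
    (hint : ∀ t ≥ 0, ∀ k, y t k = y 0 k + ∫ τ in (0 : ℝ)..t, ∑ l, b τ k l * y τ l)
    {T : ℝ} (hT : 0 ≤ T) (k : ι) : 0 ≤ y T k := by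
  obtain ⟨M, hM⟩ := (isCompact_Icc (a := 0) (b := T)).bddAbove_image
    (f := fun τ => ∑ l, ∑ k, b τ k l)
    (continuous_finsetSum _ fun l _ => continuous_finsetSum _ fun k _ => hb k l).continuousOn
  have hcol : ∀ τ ∈ Icc 0 T, ∀ l, ∑ k, b τ k l ≤ M := fun τ hτ l =>
    (Finset.single_le_sum (f := fun l => ∑ k, b τ k l)
      (fun l _ => Finset.sum_nonneg fun k _ => hb_nonneg τ hτ.1 k l) (Finset.mem_univ l)).trans
      (hM (mem_image_of_mem _ hτ))
  have hM_nonneg : 0 ≤ M :=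
    (Finset.sum_nonneg fun j _ => hb_nonneg 0 le_rfl j k).trans (hcol 0 ⟨le_rfl, hT⟩ k)
  have hφ : Continuous fun τ => ∑ k, (y τ k)⁻ :=
    continuous_finsetSum _ fun k _ => continuous_negPart.comp (hy k)
  have hφT := eq_zero_of_le_mul_integral hφ hM_nonneg
    (fun t _ => Finset.sum_nonneg fun k _ => negPart_nonneg _)
    (fun t ht => sum_negPart_le_mul_integral ht.1 hy hb (fun τ hτ => hb_nonneg τ hτ.1)
      (fun τ hτ => hcol τ ⟨hτ.1, hτ.2.trans ht.2⟩) hy₀ (hint t ht.1)) T ⟨hT, le_rfl⟩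
  have := (Finset.sum_eq_zero_iff_of_nonneg fun k _ => negPart_nonneg _).1 hφT k
    (Finset.mem_univ k)
  rwa [negPart_eq_zero] at this

lemma nonneg_of_hasDerivWithinAt_of_coeff_nonneg {ι : Type*} [Fintype ι] {Y : ℝ → ι → ℝ}
    {B : ℝ → ι → ι → ℝ} (hB : ∀ k l, ContinuousOn (fun t => B t k l) (Ici 0))
    (hB_nonneg : ∀ t ≥ 0, ∀ k l, 0 ≤ B t k l)
    (hY : ∀ k, ∀ t ≥ 0, HasDerivWithinAt (fun τ => Y τ k) (∑ l, B t k l * Y t l) (Ici 0) t)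
    (hY₀ : ∀ k, 0 ≤ Y 0 k) {T : ℝ} (hT : 0 ≤ T) (k : ι) : 0 ≤ Y T k := by
  have hY_on : ∀ l, ContinuousOn (fun t => Y t l) (Ici 0) := fun l t ht =>
    (hY l t ht).continuousWithinAt
  have key := nonneg_of_eq_add_integral (y := fun τ l => Y (max τ 0) l)
    (b := fun τ k l => B (max τ 0) k l) (fun l => continuous_comp_max_of_continuousOn (hY_on l))
    (fun k l => continuous_comp_max_of_continuousOn (hB k l))
    (fun τ _ => hB_nonneg _ (le_max_right τ 0)) (by simpa using hY₀) (fun t ht k => ?_) hT k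
  · simpa [max_eq_left hT] using key
  · rw [integral_comp_max_eq_sub (hY k)
      (continuousOn_finsetSum _ fun l _ => (hB k l).mul (hY_on l)) ht]
    simp [max_eq_left ht]

lemma eq_mul_exp_sub_of_hasDerivWithinAt {f A a : ℝ → ℝ}
    (hA : ∀ t ≥ 0, HasDerivWithinAt A (a t) (Ici 0) t)
    (hf : ∀ t ≥ 0, HasDerivWithinAt f (-(a t * f t)) (Ici 0) t) {t : ℝ} (ht : 0 ≤ t) :
    f t = f 0 * Real.exp (A 0 - A t) := by
  have hg : ∀ u ≥ 0, HasDerivWithinAt (fun τ => f τ * Real.exp (A τ)) 0 (Ici 0) u :=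
    fun u hu => ((hf u hu).mul (hA u hu).exp).congr_deriv (by ring)
  have hconst := constant_of_has_deriv_right_zero (f := fun τ => f τ * Real.exp (A τ))
    (fun u hu => (hg u hu.1).continuousWithinAt.mono Icc_subset_Ici_self)
    (fun u hu => (hg u hu.1).mono (Ici_subset_Ici.2 hu.1)) t ⟨ht, le_rfl⟩
  rw [Real.exp_sub, ← mul_div_assoc, ← hconst, mul_div_cancel_right₀ _ (Real.exp_ne_zero _)]

lemma eq_zero_of_tendsto_of_tendsto_deriv {f f' : ℝ → ℝ} {c L : ℝ}
    (hf : ∀ᶠ t in atTop, HasDerivAt f (f' t) t) (hfc : Tendsto f atTop (𝓝 c))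
    (hf' : Tendsto f' atTop (𝓝 L)) : L = 0 := by
  obtain ⟨T, hT⟩ := eventually_atTop.1 hf
  have hmvt : ∀ t, ∃ ξ, t ≤ ξ ∧ (T ≤ t → f' ξ = f (t + 1) - f t) := by
    intro t
    by_cases ht : T ≤ t
    · obtain ⟨ξ, hξ, heq⟩ := exists_hasDerivAt_eq_slope f f' (lt_add_one t)
        (fun u hu => (hT u (ht.trans hu.1)).continuousAt.continuousWithinAt)
        fun u hu => hT u (ht.trans hu.1.le)
      exact ⟨ξ, hξ.1.le, fun _ => by rw [heq, add_sub_cancel_left, div_one]⟩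
    · exact ⟨t, le_rfl, fun h => absurd h ht⟩
  choose ξ hξ using hmvt
  have hξ_top : Tendsto ξ atTop atTop := tendsto_atTop_mono (fun t => (hξ t).1) tendsto_id
  have hslope : Tendsto (fun t => f (t + 1) - f t) atTop (𝓝 0) := by
    simpa using (hfc.comp (tendsto_atTop_add_const_right _ 1 tendsto_id)).sub hfc
  refine tendsto_nhds_unique ((hf'.comp hξ_top).congr' ?_) hslope
  filter_upwards [eventually_ge_atTop T] with t ht using (hξ t).2 ht

lemma exists_tendsto_of_antitoneOn_Ici {f : ℝ → ℝ} {a b : ℝ} (hf : AntitoneOn f (Ici a))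
    (hb : ∀ t ≥ a, b ≤ f t) : ∃ c, Tendsto f atTop (𝓝 c) := by
  have hanti : Antitone fun t => f (max t a) := fun s t hst =>
    hf (le_max_right s a) (le_max_right t a) (max_le_max hst le_rfl)
  refine ⟨_, (tendsto_atTop_ciInf hanti ⟨b, ?_⟩).congr' ?_⟩
  · rintro _ ⟨t, rfl⟩
    exact hb _ (le_max_right t a)
  · filter_upwards [eventually_ge_atTop a] with t ht
    rw [max_eq_left ht]

namespace sirODE

variable {K : ℕ} {W : Matrix (Fin K) (Fin K) ℝ} {η γ : ℝ} {s i x : ℝ → Fin K → ℝ}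

lemma hasDerivWithinAt_s_add_x (h : sirODE W η γ s i x) (l : Fin K) {t : ℝ} (ht : 0 ≤ t) :
    HasDerivWithinAt (fun τ => s τ l + x τ l) (-(η + γ) * x t l) (Ici 0) t :=
  ((h l t ht).1.add (h l t ht).2.2).congr_deriv (by ring)

lemma s_eq_mul_exp (h : sirODE W η γ s i x) (hηγ : η + γ ≠ 0) {t : ℝ} (ht : 0 ≤ t) (k : Fin K) :
    s t k = s 0 k * Real.exp
      (-(η / (η + γ)) * ∑ l, W l k * (s 0 l + x 0 l - (s t l + x t l))) := by
  have hA : ∀ u ≥ 0, HasDerivWithinAt (fun τ => -(η / (η + γ)) * ∑ l, W l k * (s τ l + x τ l))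
      (η * ∑ l, x u l * W l k) (Ici 0) u := fun u hu =>
    ((HasDerivWithinAt.fun_sum fun l _ =>
      (h.hasDerivWithinAt_s_add_x l hu).const_mul (W l k)).const_mul _).congr_deriv <| by
        rw [Finset.mul_sum, Finset.mul_sum]
        exact Finset.sum_congr rfl fun l _ => by field_simp
  rw [eq_mul_exp_sub_of_hasDerivWithinAt hA (fun u hu => (h k u hu).1.congr_deriv (by ring)) ht]
  simp only [← mul_sub, ← Finset.sum_sub_distrib]

lemma s_nonneg (h : sirODE W η γ s i x) (hηγ : η + γ ≠ 0) (hs₀ : ∀ k, 0 ≤ s 0 k) {t : ℝ}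
    (ht : 0 ≤ t) (k : Fin K) : 0 ≤ s t k := by
  rw [h.s_eq_mul_exp hηγ ht k]
  exact mul_nonneg (hs₀ k) (Real.exp_nonneg _)

lemma x_nonneg (h : sirODE W η γ s i x) (hW : ∀ k l, 0 ≤ W k l) (hη : 0 ≤ η)
    (hs : ∀ t ≥ 0, ∀ k, 0 ≤ s t k) (hx₀ : ∀ k, 0 ≤ x 0 k) {t : ℝ} (ht : 0 ≤ t) (k : Fin K) :
    0 ≤ x t k := by
  refine (mul_nonneg_iff_of_pos_left (Real.exp_pos ((η + γ) * t))).1 <|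
    nonneg_of_hasDerivWithinAt_of_coeff_nonneg (Y := fun τ k => Real.exp ((η + γ) * τ) * x τ k)
      (B := fun τ k l => η * s τ k * W l k)
      (fun k l => (continuousOn_const.mul fun t ht => (h k t ht).1.continuousWithinAt).mul
        continuousOn_const)
      (fun τ hτ k l => mul_nonneg (mul_nonneg hη (hs τ hτ k)) (hW l k))
      (fun k τ hτ => ?_) (by simpa using hx₀) ht k
  have he := (((hasDerivAt_id τ).const_mul (η + γ)).exp).hasDerivWithinAt (s := Ici 0)
  refine (he.mul (h k τ hτ).2.2).congr_deriv ?_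
  have hsum : ∑ l, η * s τ k * W l k * (Real.exp ((η + γ) * τ) * x τ l) =
      η * s τ k * Real.exp ((η + γ) * τ) * ∑ l, x τ l * W l k := by
    rw [Finset.mul_sum]
    exact Finset.sum_congr rfl fun l _ => by ring
  rw [hsum, id]
  ring

lemma tendsto_s_add_x (h : sirODE W η γ s i x) (hηγ : 0 < η + γ) (hs : ∀ t ≥ 0, ∀ k, 0 ≤ s t k)
    (hx : ∀ t ≥ 0, ∀ k, 0 ≤ x t k) {sLim : Fin K → ℝ}
    (hlim : ∀ k, Tendsto (fun t => s t k) atTop (𝓝 (sLim k))) (l : Fin K) :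
    Tendsto (fun t => s t l + x t l) atTop (𝓝 (sLim l)) := by
  have hanti : AntitoneOn (fun t => s t l + x t l) (Ici 0) := antitoneOn_of_hasDerivWithinAt_nonpos
    (convex_Ici 0) (fun t ht => (h.hasDerivWithinAt_s_add_x l ht).continuousWithinAt)
    (fun t ht => (h.hasDerivWithinAt_s_add_x l (interior_subset ht)).mono interior_subset)
    fun t ht => mul_nonpos_of_nonpos_of_nonneg (by linarith) (hx t (interior_subset ht) l)
  obtain ⟨c, hc⟩ := exists_tendsto_of_antitoneOn_Ici hanti (b := 0) fun t ht =>
    add_nonneg (hs t ht l) (hx t ht l)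
  have hx_lim : Tendsto (fun t => x t l) atTop (𝓝 (c - sLim l)) :=
    (hc.sub (hlim l)).congr fun t => add_sub_cancel_left _ _
  have hderiv : ∀ᶠ t in atTop, HasDerivAt (fun t => s t l + x t l) (-(η + γ) * x t l) t := by
    filter_upwards [eventually_gt_atTop 0] with t ht
    exact (h.hasDerivWithinAt_s_add_x l ht.le).hasDerivAt (Ici_mem_nhds ht)
  have hc_eq := eq_zero_of_tendsto_of_tendsto_deriv hderiv hc (hx_lim.const_mul _)
  rw [mul_eq_zero, sub_eq_zero] at hc_eq
  rwa [← hc_eq.resolve_left (by linarith)]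

end sirODE

/-- For solutions of the SIR-SBM system with initial data in `U₀`, the limit
`s(∞)` satisfies `s_k(∞) = s_k(0) exp(-(η/(η+γ)) Σ_ℓ W_{ℓk}(s_ℓ(0) - s_ℓ(∞) + x_ℓ(0)))`. -/
theorem stmt9 {K : ℕ} (W : Matrix (Fin K) (Fin K) ℝ) (hW : ∀ k l, 0 ≤ W k l)
    (η γ : ℝ) (hη : 0 < η) (hγ : 0 < γ)
    (s i x : ℝ → Fin K → ℝ) (hODE : sirODE W η γ s i x)
    (h0 : inU0 (s 0) (i 0) (x 0))
    (sInf : Fin K → ℝ) (hlim : ∀ k, Tendsto (fun t => s t k) atTop (nhds (sInf k))) :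
    ∀ k : Fin K,
      sInf k = s 0 k *
        Real.exp (-(η / (η + γ)) * ∑ l, W l k * (s 0 l - sInf l + x 0 l)) := by
  obtain ⟨hs₀, -, hx₀, -, -⟩ := h0
  have hηγ : 0 < η + γ := add_pos hη hγ
  have hs : ∀ t ≥ 0, ∀ k, 0 ≤ s t k := fun t ht => hODE.s_nonneg hηγ.ne' hs₀ ht
  have hx : ∀ t ≥ 0, ∀ k, 0 ≤ x t k := fun t ht => hODE.x_nonneg hW hη.le hs hx₀ ht
  intro k
  have hs_lim : Tendsto (fun t => s t k) atTop (𝓝 (s 0 k * Real.exp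
      (-(η / (η + γ)) * ∑ l, W l k * (s 0 l + x 0 l - sInf l)))) := by
    refine (((Real.continuous_exp.tendsto _).comp <| (tendsto_finsetSum _ fun l _ =>
      (tendsto_const_nhds.sub (hODE.tendsto_s_add_x hηγ hs hx hlim l)).const_mul (W l k)).const_mul
      _).const_mul _).congr' ?_
    filter_upwards [eventually_ge_atTop 0] with t ht
    exact (hODE.s_eq_mul_exp hηγ.ne' ht k).symm
  rw [tendsto_nhds_unique (hlim k) hs_lim]
  simp only [add_sub_right_comm]
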